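/- For an integer N ≥ 3, let P be the cyclic random-walk transition matrix on ℤ/Nℤ, and let π⁰ be any probability distribution on ℤ/Nℤ (π⁰_i ≥ 0 and Σ_i π⁰_i = 1). Define πⁿ_j = Σ_i π⁰_i (P^n)(i,j). Then for every n ≥ 1 and every state j, |πⁿ_j − 1/N| ≤ ε_n, where ε_n = ((3^{N−1} − 1)/3^{N−1})^{(n/(N−1))−1} (real exponent). -/

import Mathlib

/-- The cyclic random-walk transition matrix on `ℤ/Nℤ`:
`P i j = 1/3` if `j ∈ {i−1, i, i+1}` and `0` otherwise. -/
noncomputable def cyclicRW (N : ℕ) : Matrix (ZMod N) (ZMod N) ℝ :=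
  fun i j => if j = i - 1 ∨ j = i ∨ j = i + 1 then 1 / 3 else 0

/-!
Doeblin's argument. In `N - 1` steps the walk can go from `i` to any `i + d`, `d ≤ N - 1`, by `d`
steps to the right and `N - 1 - d` steps in place, each of probability `1/3`; so every entry of
`P^(N-1)` is at least `δ = 3^-(N-1)`. For a deviation `e` from the uniform distribution (so
`∑ e = 0`) this gives `(e ᵥ* P^(N-1)) j = ∑ i, e i * (P^(N-1) i j - δ)`, hence
`‖e ᵥ* P^(N-1)‖∞ ≤ (1 - N δ) ‖e‖∞`. Since `P` is doubly stochastic the uniform distribution is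
stationary, and iterating gives geometric decay in blocks of `N - 1` steps.
-/

open Finset Matrix

namespace Matrix

variable {ι : Type*} [Fintype ι]

theorem apply_mul_apply_le_mul_apply {A B : Matrix ι ι ℝ} (hA : ∀ i j, 0 ≤ A i j)
    (hB : ∀ i j, 0 ≤ B i j) (i l j : ι) : A i l * B l j ≤ (A * B) i j :=
  single_le_sum (f := fun k => A i k * B k j) (fun k _ => mul_nonneg (hA i k) (hB k j))
    (mem_univ l)

theorem abs_vecMul_apply_le_of_sum_eq_zero {M : Matrix ι ι ℝ} {δ : ℝ} (hδ : ∀ i j, δ ≤ M i j)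
    (hcol : ∀ j, ∑ i, M i j = 1) {e : ι → ℝ} (he : ∑ i, e i = 0) {B : ℝ}
    (hB : ∀ i, |e i| ≤ B) (j : ι) : |(e ᵥ* M) j| ≤ (1 - Fintype.card ι * δ) * B := by
  have hshift : (e ᵥ* M) j = ∑ i, e i * (M i j - δ) := by
    simp only [vecMul, dotProduct, mul_sub, sum_sub_distrib, ← sum_mul, he, zero_mul, sub_zero]
  calc |(e ᵥ* M) j| ≤ ∑ i, |e i| * (M i j - δ) := by
        rw [hshift]
        refine (abs_sum_le_sum_abs _ _).trans_eq (sum_congr rfl fun i _ => ?_)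
        rw [abs_mul, abs_of_nonneg (sub_nonneg.2 (hδ i j))]
    _ ≤ ∑ i, B * (M i j - δ) :=
        sum_le_sum fun i _ => mul_le_mul_of_nonneg_right (hB i) (sub_nonneg.2 (hδ i j))
    _ = (1 - Fintype.card ι * δ) * B := by
        rw [← mul_sum, sum_sub_distrib, hcol, sum_const, card_univ, nsmul_eq_mul, mul_comm]

variable [DecidableEq ι]

theorem vecMul_mem_stdSimplex {M : Matrix ι ι ℝ} (hM : M ∈ rowStochastic ℝ ι) {p : ι → ℝ}
    (hp : p ∈ stdSimplex ℝ ι) : p ᵥ* M ∈ stdSimplex ℝ ι := by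
  refine ⟨nonneg_vecMul_of_mem_rowStochastic hM hp.1, ?_⟩
  rw [← dotProduct_one]
  exact vecMul_dotProduct_one_eq_one_rowStochastic hM (by rw [dotProduct_one, hp.2])

theorem const_vecMul_of_mem_colStochastic {M : Matrix ι ι ℝ} (hM : M ∈ colStochastic ℝ ι)
    (c : ℝ) : (fun _ => c) ᵥ* M = fun _ => c := by
  funext j
  simp [vecMul, dotProduct, ← mul_sum, sum_col_of_mem_colStochastic hM]

theorem abs_vecMul_pow_apply_sub_inv_card_le {M : Matrix ι ι ℝ}
    (hM : M ∈ doublyStochastic ℝ ι) {δ : ℝ} (hδ : ∀ i j, δ ≤ M i j) {p : ι → ℝ}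
    (hp : p ∈ stdSimplex ℝ ι) (q : ℕ) (j : ι) :
    |(p ᵥ* M ^ q) j - (Fintype.card ι : ℝ)⁻¹| ≤ (1 - Fintype.card ι * δ) ^ q := by
  obtain ⟨hrow, hcol⟩ := mem_doublyStochastic_iff_mem_rowStochastic_and_mem_colStochastic.1 hM
  have hcard : (Fintype.card ι : ℝ) ≠ 0 := by
    have : Nonempty ι := ⟨j⟩
    exact_mod_cast Fintype.card_ne_zero
  set u : ι → ℝ := fun _ => (Fintype.card ι : ℝ)⁻¹
  induction q generalizing j with
  | zero =>
    have hpj := mem_Icc_of_mem_stdSimplex hp j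
    rw [pow_zero, vecMul_one, pow_zero, abs_sub_le_iff]
    constructor <;> linarith [hpj.1, hpj.2, Nat.cast_inv_le_one (α := ℝ) (Fintype.card ι),
      inv_nonneg.2 (Nat.cast_nonneg (α := ℝ) (Fintype.card ι))]
  | succ q ih =>
    set v := p ᵥ* M ^ q
    have hv : v ∈ stdSimplex ℝ ι := vecMul_mem_stdSimplex (pow_mem hrow q) hp
    have hstep : (p ᵥ* M ^ (q + 1)) j - u j = ((v - u) ᵥ* M) j := by
      rw [pow_succ, ← vecMul_vecMul, sub_vecMul, const_vecMul_of_mem_colStochastic hcol]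
      rfl
    have hsum : ∑ i, (v - u) i = 0 := by
      simp only [Pi.sub_apply, sum_sub_distrib, hv.2, u, sum_const, card_univ, nsmul_eq_mul,
        mul_inv_cancel₀ hcard, sub_self]
    rw [hstep, pow_succ']
    exact abs_vecMul_apply_le_of_sum_eq_zero hδ (sum_col_of_mem_colStochastic hcol) hsum ih j

end Matrix

theorem Real.pow_div_le_rpow_div_sub_one {c : ℝ} (hc₀ : 0 < c) (hc₁ : c ≤ 1) (n m : ℕ) :
    c ^ (n / m) ≤ c ^ ((n : ℝ) / m - 1) := by
  rw [← Real.rpow_natCast]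
  refine Real.rpow_le_rpow_of_exponent_ge hc₀ hc₁ ?_
  simpa only [Nat.floor_div_eq_div] using (Nat.sub_one_lt_floor ((n : ℝ) / m)).le

section CyclicRandomWalk

variable {N : ℕ}

theorem cyclicRW_apply_comm (i j : ZMod N) : cyclicRW N i j = cyclicRW N j i := by
  unfold cyclicRW
  congr 1
  apply propext
  constructor <;> rintro (rfl | rfl | rfl) <;> simp

theorem card_sub_one_insert_self_insert_add_one (hN : 3 ≤ N) (i : ZMod N) :
    ({i - 1, i, i + 1} : Finset (ZMod N)).card = 3 := by
  have : Fact (1 < N) := ⟨by omega⟩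
  have htwo : (2 : ZMod N) ≠ 0 := by
    rw [← Nat.cast_ofNat, ne_eq, ZMod.natCast_eq_zero_iff]
    exact fun h => by have := Nat.le_of_dvd two_pos h; omega
  rw [card_eq_three]
  refine ⟨_, _, _, ?_, ?_, ?_, rfl⟩
  · simp
  · intro h; apply htwo; linear_combination -h
  · simp

variable [NeZero N]

theorem cyclicRW_mem_doublyStochastic (hN : 3 ≤ N) :
    cyclicRW N ∈ doublyStochastic ℝ (ZMod N) := by
  have hrow : ∀ i, ∑ j, cyclicRW N i j = 1 := fun i => by
    have hfilter : (univ.filter fun j => j = i - 1 ∨ j = i ∨ j = i + 1) = {i - 1, i, i + 1} := by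
      ext; simp
    calc ∑ j, cyclicRW N i j = ∑ j ∈ {i - 1, i, i + 1}, (1 / 3 : ℝ) := by
          rw [← hfilter, sum_filter]; rfl
      _ = 1 := by
          rw [sum_const, card_sub_one_insert_self_insert_add_one hN, nsmul_eq_mul]; norm_num
  refine mem_doublyStochastic_iff_sum.2 ⟨fun i j => ?_, hrow, fun j => ?_⟩
  · unfold cyclicRW; split <;> norm_num
  · simpa only [cyclicRW_apply_comm _ j] using hrow j

theorem cyclicRW_pow_apply_add_ge (hN : 3 ≤ N) {k d : ℕ} (hd : d ≤ k) (i : ZMod N) :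
    (1 / 3 : ℝ) ^ k ≤ (cyclicRW N ^ k) i (i + d) := by
  induction k generalizing d with
  | zero => simp [Nat.le_zero.1 hd]
  | succ k ih =>
    obtain ⟨l, hl, hstep⟩ : ∃ l, (1 / 3 : ℝ) ^ k ≤ (cyclicRW N ^ k) i l ∧
        cyclicRW N l (i + d) = 1 / 3 := by
      rcases hd.lt_or_eq with hd | rfl
      · exact ⟨i + d, ih (by omega), if_pos (Or.inr (Or.inl rfl))⟩
      · exact ⟨i + k, ih le_rfl, if_pos (Or.inr (Or.inr (by push_cast; ring)))⟩
    have hP := cyclicRW_mem_doublyStochastic hN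
    calc (1 / 3 : ℝ) ^ (k + 1) ≤ (cyclicRW N ^ k) i l * cyclicRW N l (i + d) := by
          rw [pow_succ, hstep]; gcongr
      _ ≤ (cyclicRW N ^ (k + 1)) i (i + d) := by
          rw [pow_succ]
          exact apply_mul_apply_le_mul_apply (A := cyclicRW N ^ k) (B := cyclicRW N)
            (fun _ _ => nonneg_of_mem_doublyStochastic (pow_mem hP k))
            (fun _ _ => nonneg_of_mem_doublyStochastic hP) _ _ _

theorem cyclicRW_pow_pred_apply_ge (hN : 3 ≤ N) (i j : ZMod N) :
    (1 / 3 : ℝ) ^ (N - 1) ≤ (cyclicRW N ^ (N - 1)) i j := by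
  have hd : (j - i : ZMod N).val ≤ N - 1 := Nat.le_pred_of_lt (ZMod.val_lt _)
  simpa [ZMod.natCast_zmod_val] using cyclicRW_pow_apply_add_ge hN hd i

end CyclicRandomWalk

/-- For `N ≥ 3` and any initial probability distribution `π⁰` on
`ℤ/Nℤ`, setting `πⁿ_j = Σ_i π⁰_i (P^n)(i,j)`, we have
`|πⁿ_j − 1/N| ≤ ((3^{N−1} − 1)/3^{N−1})^{(n/(N−1))−1}` (real exponent)
for every `n ≥ 1` and every state `j`. -/
theorem cyclicRW_distribution_convergence (N : ℕ) [NeZero N] (hN : 3 ≤ N)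
    (π0 : ZMod N → ℝ) (hπ0_nonneg : ∀ i, 0 ≤ π0 i) (hπ0_sum : ∑ i, π0 i = 1) :
    ∀ n : ℕ, 1 ≤ n → ∀ j : ZMod N,
      |(∑ i, π0 i * (cyclicRW N ^ n) i j) - 1 / (N : ℝ)| ≤
        (((3 : ℝ) ^ (N - 1) - 1) / (3 : ℝ) ^ (N - 1)) ^ ((n : ℝ) / ((N : ℝ) - 1) - 1) := by
  intro n _ j
  set m := N - 1
  set δ : ℝ := (1 / 3) ^ m
  have hP := cyclicRW_mem_doublyStochastic hN
  have hrow := (mem_doublyStochastic_iff_mem_rowStochastic_and_mem_colStochastic.1 hP).1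
  have hδ : ∀ i j, δ ≤ (cyclicRW N ^ m) i j := cyclicRW_pow_pred_apply_ge hN
  have hNδ : N * δ ≤ 1 := by
    simpa [sum_col_of_mem_doublyStochastic (pow_mem hP m)] using
      card_nsmul_le_sum univ (fun i => (cyclicRW N ^ m) i j) δ fun i _ => hδ i j
  have hstart : π0 ᵥ* cyclicRW N ^ (n % m) ∈ stdSimplex ℝ (ZMod N) :=
    vecMul_mem_stdSimplex (pow_mem hrow _) ⟨hπ0_nonneg, hπ0_sum⟩
  -- `n = n % m + m * (n / m)`: a few single steps inside the simplex, then `n / m` blocks of `m`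
  have hblocks := abs_vecMul_pow_apply_sub_inv_card_le (pow_mem hP m) hδ hstart (n / m) j
  rw [vecMul_vecMul, ← pow_mul, ← pow_add, Nat.mod_add_div, ZMod.card] at hblocks
  have hbase : ((3 : ℝ) ^ (N - 1) - 1) / 3 ^ (N - 1) = 1 - δ := by
    simp only [δ, m, one_div, inv_pow]; field_simp
  have hexp : (N : ℝ) - 1 = m := by rw [Nat.cast_pred (NeZero.pos N)]
  have hδ0 : 0 ≤ δ := by positivity
  have hN3 : (3 : ℝ) ≤ N := by exact_mod_cast hN
  calc |∑ i, π0 i * (cyclicRW N ^ n) i j - 1 / (N : ℝ)|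
      = |(π0 ᵥ* cyclicRW N ^ n) j - (N : ℝ)⁻¹| := by rw [one_div]; rfl
    _ ≤ (1 - N * δ) ^ (n / m) := hblocks
    _ ≤ (1 - δ) ^ (n / m) := by
        gcongr
        nlinarith
    _ ≤ (1 - δ) ^ ((n : ℝ) / m - 1) :=
        Real.pow_div_le_rpow_div_sub_one (by nlinarith) (by linarith) n m
    _ = _ := by rw [hbase, hexp]
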